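/- (Proposition 3.1) Let Mᵒ = (bᵒ, uᵒ) and Mᵃ = (bᵃ, uᵃ) be subjective opinions over K classes whose conflict C satisfies C < 1, and let (b, u) be their reduced Dempster combination. Fix an index t : Fin K (the ground-truth class). If bᵃ t ≥ bᵒ k for every k (i.e. bᵃ t is at least the largest belief mass of Mᵒ), then b t ≥ bᵒ t: integrating the opinion Mᵃ does not decrease the belief assigned to the ground-truth class. -/

import Mathlib

open Finset

/-- The conflict between two belief-mass assignments: `C = ∑_{i ≠ j} b₁ i * b₂ j`. -/
noncomputable def conflict {K : ℕ} (b₁ b₂ : Fin K → ℝ) : ℝ :=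
  ∑ i, ∑ j ∈ univ.filter (fun j => j ≠ i), b₁ i * b₂ j

/-- The belief masses of the reduced Dempster combination:
`b k = (b¹ k * b² k + b¹ k * u² + b² k * u¹) / (1 − C)`. -/
noncomputable def combBelief {K : ℕ} (b₁ b₂ : Fin K → ℝ) (u₁ u₂ : ℝ) (k : Fin K) : ℝ :=
  (b₁ k * b₂ k + b₁ k * u₂ + b₂ k * u₁) / (1 - conflict b₁ b₂)

/-- The uncertainty mass of the reduced Dempster combination: `u = u¹ * u² / (1 − C)`. -/
noncomputable def combUncertainty {K : ℕ} (b₁ b₂ : Fin K → ℝ) (u₁ u₂ : ℝ) : ℝ :=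
  (u₁ * u₂) / (1 - conflict b₁ b₂)

/-!
Writing `D = ∑ k, bᵒ k * bᵃ k` for the agreeing mass, the normalisation constraints give
`1 - C = uᵒ + uᵃ - uᵒ uᵃ + D`. Since every `bᵒ k ≤ bᵃ t`, we have `D ≤ bᵃ t (1 - uᵃ)`, and
after clearing the denominator the claim reduces to
`0 ≤ uᵒ (bᵃ t - bᵒ t) + bᵒ t uᵒ uᵃ + bᵒ t bᵃ t uᵃ`.
-/

theorem conflict_eq_sum_mul_sum_sub {K : ℕ} (b₁ b₂ : Fin K → ℝ) :
    conflict b₁ b₂ = (∑ k, b₁ k) * (∑ k, b₂ k) - ∑ k, b₁ k * b₂ k := by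
  have row : ∀ i, ∑ j ∈ univ.filter (fun j => j ≠ i), b₁ i * b₂ j
      = b₁ i * ∑ j, b₂ j - b₁ i * b₂ i := fun i => by
    rw [filter_ne', sum_erase_eq_sub (mem_univ i), ← mul_sum]
  simp only [conflict, row, sum_sub_distrib, ← sum_mul]

theorem one_sub_conflict_eq {K : ℕ} {b₁ b₂ : Fin K → ℝ} {u₁ u₂ : ℝ}
    (hs₁ : u₁ + ∑ k, b₁ k = 1) (hs₂ : u₂ + ∑ k, b₂ k = 1) :
    1 - conflict b₁ b₂ = u₁ + u₂ - u₁ * u₂ + ∑ k, b₁ k * b₂ k := by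
  rw [conflict_eq_sum_mul_sum_sub, eq_sub_of_add_eq' hs₁, eq_sub_of_add_eq' hs₂]
  ring

theorem sum_mul_le_of_le {K : ℕ} {b₁ b₂ : Fin K → ℝ} {c : ℝ}
    (hb₁ : ∀ k, b₁ k ≤ c) (hb₂ : ∀ k, 0 ≤ b₂ k) :
    ∑ k, b₁ k * b₂ k ≤ c * ∑ k, b₂ k := by
  rw [mul_sum]
  exact sum_le_sum fun k _ => mul_le_mul_of_nonneg_right (hb₁ k) (hb₂ k)

theorem comb_belief_ge_of_additional_strong_general (K : ℕ)
    (bo ba : Fin K → ℝ) (uo ua : ℝ)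
    (hbo : ∀ k, 0 ≤ bo k) (huo : 0 ≤ uo) (hso : uo + ∑ k, bo k = 1)
    (hba : ∀ k, 0 ≤ ba k) (hua : 0 ≤ ua) (hsa : ua + ∑ k, ba k = 1)
    (hC : conflict bo ba < 1)
    (t : Fin K) (ht : ∀ k, bo k ≤ ba t) :
    bo t ≤ combBelief bo ba uo ua t := by
  have hagree : ∑ k, bo k * ba k ≤ ba t * (1 - ua) := by
    rw [← eq_sub_of_add_eq' hsa]
    exact sum_mul_le_of_le ht hba
  rw [combBelief, le_div_iff₀ (sub_pos.2 hC), one_sub_conflict_eq hso hsa]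
  have hbot := hbo t
  calc bo t * (uo + ua - uo * ua + ∑ k, bo k * ba k)
      ≤ bo t * (uo + ua - uo * ua + ba t * (1 - ua)) := by gcongr
    _ ≤ bo t * ba t + bo t * ua + ba t * uo := by
      nlinarith [mul_le_mul_of_nonneg_right (ht t) huo, mul_nonneg (mul_nonneg hbot huo) hua,
        mul_nonneg (mul_nonneg hbot (hba t)) hua]

/-- Proposition 3.1: if the additional opinion's belief in the ground-truth
class `t` is at least the largest belief mass of the original opinion, then combining does
not decrease the belief in `t`. -/
theorem comb_belief_ge_of_additional_strong (K : ℕ) (hK : 1 ≤ K)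
    (bo ba : Fin K → ℝ) (uo ua : ℝ)
    (hbo : ∀ k, 0 ≤ bo k) (huo : 0 ≤ uo) (hso : uo + ∑ k, bo k = 1)
    (hba : ∀ k, 0 ≤ ba k) (hua : 0 ≤ ua) (hsa : ua + ∑ k, ba k = 1)
    (hC : conflict bo ba < 1)
    (t : Fin K) (ht : ∀ k, bo k ≤ ba t) :
    bo t ≤ combBelief bo ba uo ua t :=
  comb_belief_ge_of_additional_strong_general K bo ba uo ua hbo huo hso hba hua hsa hC t ht
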